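/- Odd-part decomposition of a generalized hypergeometric series: let q ≥ 0 be an integer, let a₁,…,a_{q+1} be real numbers, let b₁,…,b_q be positive real numbers, and let z be a real number with |z| < 1. Then ∑_{n≥0} ((a₁)ₙ⋯(a_{q+1})ₙ)/((b₁)ₙ⋯(b_q)ₙ) · zⁿ/n! − ∑_{n≥0} ((a₁)ₙ⋯(a_{q+1})ₙ)/((b₁)ₙ⋯(b_q)ₙ) · (−z)ⁿ/n! = 2z·(a₁a₂⋯a_{q+1})/(b₁b₂⋯b_q) · ∑_{n≥0} [∏_{j=1}^{q+1} (a_j/2+1/2)ₙ·(a_j/2+1)ₙ] / [(3/2)ₙ·∏_{k=1}^{q} (b_k/2+1/2)ₙ·(b_k/2+1)ₙ] · (z²)ⁿ/n!. -/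

import Mathlib

/-!
Since `F(-z)` has the coefficients of `F(z)` with the odd ones negated, `F(z) - F(-z)` is twice
the odd part of `F`. For odd indices the Pochhammer symbols split by duplication,
`(a)_{2m+1} = a · 4^m · (a/2 + 1/2)_m · (a/2 + 1)_m`, and `(2m+1)! = (1)_{2m+1}` becomes
`4^m · m! · (3/2)_m`; as there is one more upper than lower parameter, the powers of `4` cancel.
Both series converge for `|z| < 1` by the ratio test.
-/

open Real

/-- The Pochhammer symbol (shifted factorial) `(a)ₙ` for a real number `a`. -/
noncomputable def poch (a : ℝ) (n : ℕ) : ℝ := Polynomial.eval a (ascPochhammer ℝ n)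

open Filter Topology

lemma poch_succ (a : ℝ) (n : ℕ) : poch a (n + 1) = poch a n * (a + n) :=
  ascPochhammer_succ_eval n a

lemma poch_one (n : ℕ) : poch 1 n = n.factorial :=
  ascPochhammer_eval_one ℝ n

lemma poch_two_mul_add_one (a : ℝ) (m : ℕ) :
    poch a (2 * m + 1) = a * 4 ^ m * (poch (a / 2 + 1 / 2) m * poch (a / 2 + 1) m) := by
  induction m with
  | zero => simp [poch]
  | succ m ih =>
    rw [show 2 * (m + 1) + 1 = 2 * m + 1 + 1 + 1 by ring, poch_succ, poch_succ, ih, poch_succ,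
      poch_succ]
    push_cast
    ring

lemma factorial_two_mul_add_one (m : ℕ) :
    ((2 * m + 1).factorial : ℝ) = 4 ^ m * m.factorial * poch (3 / 2) m := by
  rw [← poch_one, ← poch_one, poch_two_mul_add_one]
  norm_num
  ring

lemma tsum_sub_tsum_neg_eq_two_mul_tsum_odd {R : Type*} [Field R] [TopologicalSpace R]
    [IsTopologicalRing R] [T2Space R] {c : ℕ → R} {z : R}
    (hpos : Summable fun n => c n * z ^ n) (hneg : Summable fun n => c n * (-z) ^ n) :
    ∑' n, c n * z ^ n - ∑' n, c n * (-z) ^ n = 2 * ∑' m, c (2 * m + 1) * z ^ (2 * m + 1) := by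
  have hodd : Function.Injective (fun m : ℕ => 2 * m + 1) := fun x y hxy => by simpa using hxy
  have hsupp : Function.support (fun n => c n * z ^ n - c n * (-z) ^ n) ⊆
      Set.range (fun m : ℕ => 2 * m + 1) := by
    intro n hn
    rcases Nat.even_or_odd n with he | ⟨m, rfl⟩
    · exact absurd (by simp [he.neg_pow]) hn
    · exact ⟨m, rfl⟩
  rw [← hpos.tsum_sub hneg, ← hodd.tsum_eq hsupp, ← tsum_mul_left]
  refine tsum_congr fun m => ?_
  rw [(odd_two_mul_add_one m).neg_pow]
  ring

lemma summable_of_succ_eq_mul_of_tendsto {f g : ℕ → ℝ} {l : ℝ} (hl : |l| < 1)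
    (hfg : ∀ n, f (n + 1) = g n * f n) (hg : Tendsto g atTop (𝓝 l)) : Summable f := by
  obtain ⟨r, hlr, hr⟩ := exists_between hl
  refine summable_of_ratio_norm_eventually_le hr ?_
  filter_upwards [hg.abs.eventually_lt_const hlr] with n hn
  rw [hfg, norm_mul, Real.norm_eq_abs]
  exact mul_le_mul_of_nonneg_right hn.le (norm_nonneg _)

section Hypergeometric

variable {ι κ : Type*} [Fintype ι] [Fintype κ]

lemma prod_poch_two_mul_add_one (c : ι → ℝ) (m : ℕ) :
    ∏ j, poch (c j) (2 * m + 1) =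
      (∏ j, c j) * ((4 : ℝ) ^ m) ^ Fintype.card ι *
        ∏ j, poch (c j / 2 + 1 / 2) m * poch (c j / 2 + 1) m := by
  simp only [poch_two_mul_add_one, Finset.prod_mul_distrib, Finset.prod_const, Finset.card_univ]

noncomputable def hypergeomCoeff (a : ι → ℝ) (b : κ → ℝ) (n : ℕ) : ℝ :=
  (∏ j, poch (a j) n) / ((∏ k, poch (b k) n) * (n.factorial : ℝ))

lemma hypergeomCoeff_succ (a : ι → ℝ) (b : κ → ℝ) (n : ℕ) :
    hypergeomCoeff a b (n + 1) =
      (∏ j, (a j + n)) / ((∏ k, (b k + n)) * (n + 1)) * hypergeomCoeff a b n := by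
  simp only [hypergeomCoeff, poch_succ, Finset.prod_mul_distrib, Nat.factorial_succ]
  push_cast
  rw [div_mul_div_comm]
  congr 1 <;> ring

lemma tendsto_hypergeom_ratio (a : ι → ℝ) (b : κ → ℝ)
    (hcard : Fintype.card ι = Fintype.card κ + 1) :
    Tendsto (fun n : ℕ => (∏ j, (a j + n)) / ((∏ k, (b k + n)) * (n + 1))) atTop
      (𝓝 1) := by
  have hlin (c : ℝ) : Tendsto (fun n : ℕ => (c + n) / (n + 1)) atTop (𝓝 1) := by
    simpa [add_comm (1 : ℝ)] using tendsto_add_mul_div_add_mul_atTop_nhds c 1 1 one_ne_zero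
  have hnum := tendsto_finsetProd Finset.univ fun j _ => hlin (a j)
  have hden := tendsto_finsetProd Finset.univ fun k _ => hlin (b k)
  have hratio := hnum.div hden (by simp)
  rw [Finset.prod_const_one, Finset.prod_const_one, div_one] at hratio
  refine hratio.congr fun n => ?_
  have hn : (n + 1 : ℝ) ^ Fintype.card κ ≠ 0 := by positivity
  rw [Pi.div_apply, Finset.prod_div_distrib, Finset.prod_div_distrib, Finset.prod_const,
    Finset.prod_const, Finset.card_univ, Finset.card_univ, hcard, pow_succ', ← div_div,
    div_div_div_cancel_right₀ hn, div_div, mul_comm (n + 1 : ℝ)]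

lemma summable_hypergeomCoeff_mul_pow (a : ι → ℝ) (b : κ → ℝ)
    (hcard : Fintype.card ι = Fintype.card κ + 1) {w : ℝ} (hw : |w| < 1) :
    Summable fun n => hypergeomCoeff a b n * w ^ n :=
  summable_of_succ_eq_mul_of_tendsto
    (g := fun n => (∏ j, (a j + n)) / ((∏ k, (b k + n)) * (n + 1)) * w) hw
    (fun n => by rw [hypergeomCoeff_succ, pow_succ]; ring)
    (by simpa using (tendsto_hypergeom_ratio a b hcard).mul_const w)

lemma hypergeomCoeff_two_mul_add_one (a : ι → ℝ) (b : κ → ℝ)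
    (hcard : Fintype.card ι = Fintype.card κ + 1) (m : ℕ) :
    hypergeomCoeff a b (2 * m + 1) = (∏ j, a j) / (∏ k, b k) *
      ((∏ j, poch (a j / 2 + 1 / 2) m * poch (a j / 2 + 1) m) /
        (poch (3 / 2) m * (∏ k, poch (b k / 2 + 1 / 2) m * poch (b k / 2 + 1) m) *
          m.factorial)) := by
  have h4 : ((4 : ℝ) ^ m) ^ (Fintype.card κ + 1) ≠ 0 := by positivity
  rw [hypergeomCoeff, prod_poch_two_mul_add_one, prod_poch_two_mul_add_one,
    factorial_two_mul_add_one, hcard]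
  calc _ = ((4 : ℝ) ^ m) ^ (Fintype.card κ + 1) *
        ((∏ j, a j) * ∏ j, poch (a j / 2 + 1 / 2) m * poch (a j / 2 + 1) m) /
        (((4 : ℝ) ^ m) ^ (Fintype.card κ + 1) * ((∏ k, b k) *
          (∏ k, poch (b k / 2 + 1 / 2) m * poch (b k / 2 + 1) m) * m.factorial *
            poch (3 / 2) m)) := by ring
    _ = _ := by rw [mul_div_mul_left _ _ h4]; ring

end Hypergeometric

theorem odd_part_decomposition_general (q : ℕ) (a : Fin (q + 1) → ℝ) (b : Fin q → ℝ)
    (z : ℝ) (hz : |z| < 1) :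
    (∑' n : ℕ, (∏ j, poch (a j) n) / ((∏ k, poch (b k) n) * (n.factorial : ℝ)) * z^n)
      - (∑' n : ℕ, (∏ j, poch (a j) n) / ((∏ k, poch (b k) n) * (n.factorial : ℝ)) * (-z)^n)
      = 2 * z * ((∏ j, a j) / (∏ k, b k)) * ∑' n : ℕ,
          (∏ j, poch (a j / 2 + 1/2) n * poch (a j / 2 + 1) n) /
            (poch (3/2) n * (∏ k, poch (b k / 2 + 1/2) n * poch (b k / 2 + 1) n) *
              (n.factorial : ℝ)) * (z^2)^n := by
  have hcard : Fintype.card (Fin (q + 1)) = Fintype.card (Fin q) + 1 := by simp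
  have hsum (w : ℝ) (hw : |w| < 1) := summable_hypergeomCoeff_mul_pow a b hcard hw
  change ∑' n, hypergeomCoeff a b n * z ^ n - ∑' n, hypergeomCoeff a b n * (-z) ^ n = _
  rw [tsum_sub_tsum_neg_eq_two_mul_tsum_odd (hsum z hz) (hsum (-z) (by rwa [abs_neg])),
    ← tsum_mul_left, ← tsum_mul_left]
  refine tsum_congr fun m => ?_
  rw [hypergeomCoeff_two_mul_add_one a b hcard, pow_succ, pow_mul]
  ring

/-- Odd-part decomposition of a generalized hypergeometric series
`₍q+1₎F_q(a₁,…,a_{q+1}; b₁,…,b_q; z)`. -/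
theorem odd_part_decomposition (q : ℕ) (a : Fin (q + 1) → ℝ) (b : Fin q → ℝ)
    (hb : ∀ k, 0 < b k) (z : ℝ) (hz : |z| < 1) :
    (∑' n : ℕ, (∏ j, poch (a j) n) / ((∏ k, poch (b k) n) * (n.factorial : ℝ)) * z^n)
      - (∑' n : ℕ, (∏ j, poch (a j) n) / ((∏ k, poch (b k) n) * (n.factorial : ℝ)) * (-z)^n)
      = 2 * z * ((∏ j, a j) / (∏ k, b k)) * ∑' n : ℕ,
          (∏ j, poch (a j / 2 + 1/2) n * poch (a j / 2 + 1) n) /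
            (poch (3/2) n * (∏ k, poch (b k / 2 + 1/2) n * poch (b k / 2 + 1) n) *
              (n.factorial : ℝ)) * (z^2)^n :=
  odd_part_decomposition_general q a b z hz
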